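/- arXiv:1909.04649 — 2 statements merged into one kernel-verified Lean document; each statement's English description precedes it below -/
import Mathlib

section
/- If G is a graph whose vertex set is partitioned into ⌊l/r⌋ + 1 pairwise disjoint cliques with no edges between them, then G has no percolating set of size l for the r-neighbour bootstrap process (assuming each clique has at least r vertices). Consequently, for n large, δ₀(n, r, l) ≥ ⌊n/(⌊l/r⌋+1)⌋. -/
open Finset

/-- One step of the `r`-neighbour bootstrap process: add every vertex having
at least `r` infected neighbours. -/
def bootStep {V : Type*} [Fintype V] [DecidableEq V] (G : SimpleGraph V)
    [DecidableRel G.Adj] (r : ℕ) (A : Finset V) : Finset V :=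
  A ∪ Finset.univ.filter fun v => r ≤ ((G.neighborFinset v) ∩ A).card

/-- `A₀` percolates if iterating the bootstrap step eventually infects every vertex. -/
def percolates {V : Type*} [Fintype V] [DecidableEq V] (G : SimpleGraph V)
    [DecidableRel G.Adj] (r : ℕ) (A₀ : Finset V) : Prop :=
  ∃ t : ℕ, (bootStep G r)^[t] A₀ = Finset.univ

/-- The closure of `A₀` under the bootstrap process (iterating `card V` times
reaches the fixed point). -/
def bootClosure {V : Type*} [Fintype V] [DecidableEq V] (G : SimpleGraph V)
    [DecidableRel G.Adj] (r : ℕ) (A₀ : Finset V) : Finset V :=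
  (bootStep G r)^[Fintype.card V] A₀

/-- `f k = ⌊√(2k + 0.25) + 2.5⌋`. -/
noncomputable def f (k : ℕ) : ℕ := ⌊Real.sqrt (2 * (k : ℝ) + 0.25) + 2.5⌋₊
/-- `δ₀(n, r, l)`: least `D` such that every `n`-vertex graph with minimum degree
at least `D` has a percolating set of size `l`. -/
noncomputable def delta0 (n r l : ℕ) : ℕ :=
  sInf {D : ℕ | ∀ (G : SimpleGraph (Fin n)) (_ : DecidableRel G.Adj),
    D ≤ G.minDegree → ∃ A₀ : Finset (Fin n), A₀.card = l ∧ percolates G r A₀}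

/-!
A vertex with at least `r` infected neighbours in a graph whose edges stay inside the parts of a
partition has them all in its own part, so a part initially holding fewer than `r` infected
vertices never gains a new one. With `⌊l/r⌋ + 1` parts and `l` infected vertices, pigeonhole
provides such a part. For the bound on `δ₀`, the residue classes of `Fin n` modulo `⌊l/r⌋ + 1`
have at least `⌊n/(⌊l/r⌋ + 1)⌋` elements each, so the union of cliques on them has minimum degree
at least `⌊n/(⌊l/r⌋ + 1)⌋ - 1` and no percolating set of size `l`.
-/

open Function in
lemma exists_card_inter_lt_of_pairwise_disjoint {V ι : Type*} [DecidableEq V] [Fintype ι]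
    {P : ι → Finset V} (hdisj : Pairwise (Disjoint on P)) {A : Finset V} {r : ℕ}
    (hA : #A < Fintype.card ι * r) : ∃ i, #(A ∩ P i) < r := by
  have hsum : ∑ i, #(A ∩ P i) < ∑ _i : ι, r :=
    calc ∑ i, #(A ∩ P i) = #(univ.biUnion fun i => A ∩ P i) :=
          (card_biUnion fun i _ j _ hij =>
            (hdisj hij).mono inter_subset_right inter_subset_right).symm
      _ ≤ #A := card_le_card (biUnion_subset.2 fun _ _ => inter_subset_left)
      _ < ∑ _i : ι, r := by simpa using hA
  obtain ⟨i, -, hi⟩ := exists_lt_of_sum_lt hsum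
  exact ⟨i, hi⟩

section Bootstrap

open Function

variable {V : Type*} [Fintype V] [DecidableEq V] {G : SimpleGraph V} [DecidableRel G.Adj]
  {r : ℕ}

lemma bootStep_inter_eq_of_closed {S A : Finset V} (hS : ∀ v ∈ S, ∀ u, G.Adj v u → u ∈ S)
    (hA : #(A ∩ S) < r) : bootStep G r A ∩ S = A ∩ S := by
  rw [bootStep, union_inter_distrib_right, union_eq_left]
  intro v hv
  simp only [mem_inter, mem_filter, mem_univ, true_and] at hv
  have hsub : G.neighborFinset v ∩ A ⊆ A ∩ S := fun u hu => by
    rw [mem_inter, SimpleGraph.mem_neighborFinset] at hu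
    exact mem_inter.2 ⟨hu.2, hS v hv.2 u hu.1⟩
  exact absurd (hv.1.trans (card_le_card hsub)) hA.not_ge

lemma iterate_bootStep_inter_eq_of_closed {S A : Finset V}
    (hS : ∀ v ∈ S, ∀ u, G.Adj v u → u ∈ S) (hA : #(A ∩ S) < r) (t : ℕ) :
    (bootStep G r)^[t] A ∩ S = A ∩ S := by
  induction t with
  | zero => rfl
  | succ t ih =>
    rw [Function.iterate_succ_apply', ← ih]
    exact bootStep_inter_eq_of_closed hS (ih ▸ hA)

lemma not_percolates_of_closed {S A : Finset V} (hS : ∀ v ∈ S, ∀ u, G.Adj v u → u ∈ S)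
    (hA : #(A ∩ S) < r) (hSr : r ≤ #S) : ¬ percolates G r A := by
  rintro ⟨t, ht⟩
  have h := iterate_bootStep_inter_eq_of_closed hS hA t
  rw [ht, univ_inter] at h
  rw [← h] at hA
  exact hA.not_ge hSr

theorem not_percolates_of_partition {ι : Type*} [Fintype ι] (P : ι → Finset V)
    (hcard : ∀ i, r ≤ #(P i)) (hdisj : Pairwise (Disjoint on P))
    (hadj : ∀ x y, G.Adj x y → ∃ i, x ∈ P i ∧ y ∈ P i) {A : Finset V}
    (hA : #A < Fintype.card ι * r) : ¬ percolates G r A := by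
  obtain ⟨i, hi⟩ := exists_card_inter_lt_of_pairwise_disjoint hdisj hA
  refine not_percolates_of_closed (fun v hv u huv => ?_) hi (hcard i)
  obtain ⟨j, hvj, huj⟩ := hadj v u huv
  by_contra hui
  have hij : i ≠ j := by rintro rfl; exact hui huj
  exact disjoint_left.1 (hdisj hij) hv hvj

end Bootstrap

section FiberCliques

variable {V ι : Type*}

def fiberCliques (b : V → ι) : SimpleGraph V :=
  SimpleGraph.fromRel fun x y => b x = b y

lemma fiberCliques_adj {b : V → ι} {x y : V} :
    (fiberCliques b).Adj x y ↔ x ≠ y ∧ b x = b y := by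
  simp [fiberCliques, eq_comm]

variable [Fintype V] [DecidableEq V] [DecidableEq ι]

instance (b : V → ι) : DecidableRel (fiberCliques b).Adj :=
  fun _ _ => decidable_of_iff' _ fiberCliques_adj

lemma neighborFinset_fiberCliques (b : V → ι) (v : V) :
    (fiberCliques b).neighborFinset v = ({u | b u = b v} : Finset V).erase v := by
  ext u
  simp [fiberCliques_adj, eq_comm]

lemma not_percolates_fiberCliques [Fintype ι] {b : V → ι} {r : ℕ}
    (hcard : ∀ i, r ≤ #{v | b v = i}) {A : Finset V} (hA : #A < Fintype.card ι * r) :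
    ¬ percolates (fiberCliques b) r A :=
  not_percolates_of_partition (fun i => {v | b v = i}) hcard
    (fun i j hij => Set.pairwiseDisjoint_filter b Set.univ univ trivial trivial hij)
    (fun x y hxy => ⟨b x, by simp, by simp [(fiberCliques_adj.1 hxy).2]⟩) hA

lemma le_minDegree_fiberCliques [Nonempty V] {b : V → ι} {q : ℕ}
    (hcard : ∀ i, q ≤ #{v | b v = i}) : q - 1 ≤ (fiberCliques b).minDegree := by
  refine SimpleGraph.le_minDegree_of_forall_le_degree _ _ fun v => ?_
  rw [← SimpleGraph.card_neighborFinset_eq_degree, neighborFinset_fiberCliques,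
    card_erase_of_mem (by simp)]
  exact Nat.sub_le_sub_right (hcard (b v)) 1

end FiberCliques

lemma div_le_card_filter_mod_eq {n m : ℕ} (i : Fin m) :
    n / m ≤ #{v : Fin n | v.val % m = i} := by
  have hm : 0 < m := i.pos
  calc n / m ≤ #{x ∈ range n | x ≡ i [MOD m]} := by
        rw [← Nat.count_eq_card_filter_range, Nat.count_modEq_card n hm]
        exact Nat.le_add_right _ _
    _ = #{v : Fin n | v.val % m = i} := by
        rw [← Nat.Iio_eq_range, ← Fin.map_valEmbedding_univ, filter_map, card_map]
        simp [Nat.ModEq, Nat.mod_eq_of_lt i.isLt]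

lemma minDegree_lt_delta0 {n r l : ℕ} [Nonempty (Fin n)] (G : SimpleGraph (Fin n))
    [DecidableRel G.Adj] (h : ∀ A : Finset (Fin n), #A = l → ¬ percolates G r A) :
    G.minDegree < delta0 n r l := by
  refine le_csInf ⟨n, fun G' hdec hG' => ?_⟩ fun D hD => ?_
  · have := @G'.minDegree_lt_card _ _ hdec _
    rw [Fintype.card_fin] at this
    omega
  · by_contra! hD'
    obtain ⟨A, hA, hperc⟩ := hD G _ (Nat.le_of_lt_succ hD')
    exact h A hA hperc

theorem stmt_4_general (r l : ℕ) (hr : 1 ≤ r) :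
    (∀ (V : Type) [Fintype V] [DecidableEq V] (G : SimpleGraph V)
        [DecidableRel G.Adj] (P : Fin (l / r + 1) → Finset V),
      (∀ i, r ≤ (P i).card) →
      (∀ i, G.IsClique (↑(P i) : Set V)) →
      (∀ i j, i ≠ j → Disjoint (P i) (P j)) →
      (Finset.univ.biUnion P = Finset.univ) →
      (∀ x y, G.Adj x y → ∃ i, x ∈ P i ∧ y ∈ P i) →
      ∀ A₀ : Finset V, A₀.card = l → ¬ percolates G r A₀) ∧
    (∃ N : ℕ, ∀ n, N ≤ n → n / (l / r + 1) ≤ delta0 n r l) := by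
  set m := l / r + 1
  have hm : 0 < m := Nat.succ_pos _
  have hl : l < Fintype.card (Fin m) * r := by
    rw [Fintype.card_fin, add_mul, one_mul]
    exact Nat.lt_div_mul_add hr
  refine ⟨fun V _ _ G _ P hcard _ hdisj _ hadj A hA =>
    not_percolates_of_partition P hcard hdisj hadj (hA ▸ hl), m * r, fun n hn => ?_⟩
  let b : Fin n → Fin m := fun v => ⟨v % m, Nat.mod_lt _ hm⟩
  have hcard (i : Fin m) : n / m ≤ #{v | b v = i} := by
    simpa [b, Fin.ext_iff] using div_le_card_filter_mod_eq (n := n) i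
  have hrn : r ≤ n / m := (Nat.le_div_iff_mul_le hm).2 (by rwa [mul_comm])
  have : Nonempty (Fin n) := ⟨⟨0, by nlinarith⟩⟩
  calc n / m ≤ (fiberCliques b).minDegree + 1 := by
        have := le_minDegree_fiberCliques hcard
        omega
    _ ≤ delta0 n r l := minDegree_lt_delta0 _ fun A hA =>
        not_percolates_fiberCliques (fun i => hrn.trans (hcard i)) (hA ▸ hl)

theorem stmt_4 (r l : ℕ) (hr : 1 ≤ r) (hrl : r ≤ l) :
    (∀ (V : Type) [Fintype V] [DecidableEq V] (G : SimpleGraph V)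
        [DecidableRel G.Adj] (P : Fin (l / r + 1) → Finset V),
      (∀ i, r ≤ (P i).card) →
      (∀ i, G.IsClique (↑(P i) : Set V)) →
      (∀ i j, i ≠ j → Disjoint (P i) (P j)) →
      (Finset.univ.biUnion P = Finset.univ) →
      (∀ x y, G.Adj x y → ∃ i, x ∈ P i ∧ y ∈ P i) →
      ∀ A₀ : Finset V, A₀.card = l → ¬ percolates G r A₀) ∧
    (∃ N : ℕ, ∀ n, N ≤ n → n / (l / r + 1) ≤ delta0 n r l) :=
  stmt_4_general r l hr
end

section
/- Let r ≥ 2 and k ≥ 1, and let G be a graph on n vertices with minimum degree δ(G) ≥ ⌈n/(k+1)⌉ + (k+1)(r−1) − 1. Let A be any closed set for the r-neighbour bootstrap process with A ≠ V(G). Then |A| ≤ (k+1)(r−1) or |A| ≥ ⌈n/(k+1)⌉. -/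
open Finset

/-!
If `A` is closed, every vertex outside `A` has at most `r - 1` neighbours in `A`, while every
vertex of `A` has at least `δ + 1 - |A|` neighbours outside it. Double counting the edges between
`A` and its complement gives `|A| (δ + 1 - |A|) ≤ (n - |A|) (r - 1)`, and with the degree bound
this quadratic inequality in `|A|` fails for `(k + 1)(r - 1) < |A| < ⌈n / (k + 1)⌉`.
-/

namespace SimpleGraph

variable {V : Type*} [Fintype V] [DecidableEq V] (G : SimpleGraph V) [DecidableRel G.Adj]

theorem neighborFinset_inter_eq_filter (u : V) (s : Finset V) :
    G.neighborFinset u ∩ s = {v ∈ s | G.Adj u v} := by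
  ext v
  simp [and_comm]

theorem sum_card_neighborFinset_inter_comm (s t : Finset V) :
    ∑ u ∈ s, #(G.neighborFinset u ∩ t) = ∑ v ∈ t, #(G.neighborFinset v ∩ s) := by
  simp_rw [neighborFinset_inter_eq_filter]
  exact (sum_card_bipartiteAbove_eq_sum_card_bipartiteBelow G.Adj).trans
    (by simp_rw [bipartiteBelow, G.adj_comm])

theorem degree_lt_card_neighborFinset_inter_compl_add_card {s : Finset V} {u : V}
    (hu : u ∈ s) : G.degree u < #(G.neighborFinset u ∩ sᶜ) + #s := by
  have hin : #(G.neighborFinset u ∩ s) + 1 ≤ #s := by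
    rw [← card_erase_add_one hu]
    gcongr
    intro v hv
    rw [mem_inter, mem_neighborFinset] at hv
    exact mem_erase.2 ⟨hv.1.ne', hv.2⟩
  have hsplit := card_inter_add_card_sdiff (G.neighborFinset u) s
  rw [card_neighborFinset_eq_degree, sdiff_eq_inter_compl] at hsplit
  omega

theorem bootStep_eq_self_iff {r : ℕ} {A : Finset V} :
    bootStep G r A = A ↔ ∀ v ∉ A, #(G.neighborFinset v ∩ A) < r := by
  simp only [bootStep, union_eq_left, subset_iff, mem_filter, mem_univ, true_and]
  exact forall_congr' fun v => by rw [← not_imp_not, not_le]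

theorem card_mul_le_of_bootStep_eq {r : ℕ} {A : Finset V} (hA : bootStep G r A = A) :
    #A * (G.minDegree + 1 - #A) ≤ (Fintype.card V - #A) * (r - 1) := by
  have hout := (G.bootStep_eq_self_iff).1 hA
  calc #A * (G.minDegree + 1 - #A) = ∑ _u ∈ A, (G.minDegree + 1 - #A) := by
        rw [sum_const, smul_eq_mul]
    _ ≤ ∑ u ∈ A, #(G.neighborFinset u ∩ Aᶜ) := sum_le_sum fun u hu => by
        have := G.degree_lt_card_neighborFinset_inter_compl_add_card hu
        have := G.minDegree_le_degree u
        omega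
    _ = ∑ v ∈ Aᶜ, #(G.neighborFinset v ∩ A) := G.sum_card_neighborFinset_inter_comm A Aᶜ
    _ ≤ ∑ _v ∈ Aᶜ, (r - 1) := sum_le_sum fun v hv => Nat.le_sub_one_of_lt (hout v (mem_compl.1 hv))
    _ = (Fintype.card V - #A) * (r - 1) := by rw [sum_const, smul_eq_mul, card_compl]

end SimpleGraph

/-- With `m = q * R` and `n ≤ q * c`, the hypothesis rearranges to `(a - m) * (c - a) + a * R ≤ 0`,
which fails for `m < a < c`. -/
theorem le_mul_or_le_of_mul_sub_le {a c n q R : ℕ} (hn : n ≤ q * c)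
    (h : a * (c + q * R - a) ≤ (n - a) * R) : a ≤ q * R ∨ c ≤ a := by
  by_contra! ⟨hqR, hc⟩
  have hac : a ≤ c + q * R := by omega
  rcases le_or_gt a n with han | hna
  · zify [hac, han] at h hn
    nlinarith [mul_le_mul_of_nonneg_right hn (Int.natCast_nonneg R)]
  · rw [Nat.sub_eq_zero_of_le hna.le, zero_mul] at h
    have := Nat.mul_pos (show 0 < a by omega) (show 0 < c + q * R - a by omega)
    omega

theorem le_succ_mul_add_div_succ (n k : ℕ) : n ≤ (k + 1) * ((n + k) / (k + 1)) := by
  have := Nat.lt_div_mul_add (a := n + k) (Nat.succ_pos k)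
  nlinarith

theorem stmt_15_general {V : Type*} [Fintype V] [DecidableEq V]
    (G : SimpleGraph V) [DecidableRel G.Adj] (r k n : ℕ)
    (hn : Fintype.card V = n)
    (hdeg : (n + k) / (k + 1) + (k + 1) * (r - 1) - 1 ≤ G.minDegree)
    (A : Finset V) (hclosed : bootStep G r A = A) :
    A.card ≤ (k + 1) * (r - 1) ∨ (n + k) / (k + 1) ≤ A.card := by
  have hedges := G.card_mul_le_of_bootStep_eq hclosed
  rw [hn] at hedges
  refine le_mul_or_le_of_mul_sub_le (le_succ_mul_add_div_succ n k) (le_trans ?_ hedges)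
  exact Nat.mul_le_mul_left _ (by omega)

theorem stmt_15 {V : Type*} [Fintype V] [DecidableEq V]
    (G : SimpleGraph V) [DecidableRel G.Adj] (r k n : ℕ)
    (hr : 2 ≤ r) (hk : 1 ≤ k) (hn : Fintype.card V = n)
    (hdeg : (n + k) / (k + 1) + (k + 1) * (r - 1) - 1 ≤ G.minDegree)
    (A : Finset V) (hclosed : bootStep G r A = A) (hA : A ≠ Finset.univ) :
    A.card ≤ (k + 1) * (r - 1) ∨ (n + k) / (k + 1) ≤ A.card :=
  stmt_15_general G r k n hn hdeg A hclosed
end
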